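/- Let K ≥ 2, θ ∈ Δ, and let j ≠ k be two indices in {1,…,K}. Then the intersection Δ_k(θ) ∩ Δ_j(θ) is contained in the set {u ∈ Δ : u_j · θ_k = θ_j · u_k}. In particular, when θ_k > 0 and θ_j > 0, two distinct subsimplices Δ_k(θ) and Δ_j(θ) can only meet on the hyperplane u_j θ_k = θ_j u_k. -/
import Mathlib


noncomputable section

/-- The `ℓ`-th vertex of the probability simplex in `ℝ^K` (standard basis vector). -/
def vtx (K : ℕ) (ℓ : Fin K) : Fin K → ℝ := fun i => if i = ℓ then 1 else 0

/-- The subsimplex `Δ_k(θ)`: convex hull of `{θ} ∪ {V_ℓ : ℓ ≠ k}`. -/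
def subsimplex (K : ℕ) (k : Fin K) (θ : Fin K → ℝ) : Set (Fin K → ℝ) :=
  convexHull ℝ (insert θ {z | ∃ ℓ : Fin K, ℓ ≠ k ∧ z = vtx K ℓ})

theorem stmt2 (K : ℕ) (hK : 2 ≤ K) (θ : Fin K → ℝ) (hθ : θ ∈ stdSimplex ℝ (Fin K))
    (j k : Fin K) (hjk : j ≠ k) :
    subsimplex K k θ ∩ subsimplex K j θ ⊆
      {u ∈ stdSimplex ℝ (Fin K) | u j * θ k = θ j * u k} := by
  rintro u ⟨huk, huj⟩
  have hsub : ∀ m : Fin K, subsimplex K m θ ⊆ stdSimplex ℝ (Fin K) := by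
    intro m
    apply convexHull_min _ (convex_stdSimplex ℝ (Fin K))
    rintro z (rfl | ⟨ℓ, -, rfl⟩)
    · exact hθ
    · refine ⟨fun i => ?_, ?_⟩
      · unfold vtx; split <;> norm_num
      · simp [vtx]
  have hmem : u ∈ stdSimplex ℝ (Fin K) := hsub k huk
  refine ⟨hmem, ?_⟩
  have hlin : ∀ a b : ℝ, IsLinearMap ℝ (fun z : Fin K → ℝ => a * z k + b * z j) := by
    intro a b
    constructor
    · intro x y; simp [Pi.add_apply]; ring
    · intro c x; simp [Pi.smul_apply, smul_eq_mul]; ring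
  have h1 : θ j * u k + (-(θ k)) * u j ≤ 0 := by
    have hs : subsimplex K k θ ⊆ {z | θ j * z k + (-(θ k)) * z j ≤ 0} := by
      apply convexHull_min _ (convex_halfSpace_le (hlin _ _) 0)
      rintro z (rfl | ⟨ℓ, hℓ, rfl⟩)
      · simp; ring_nf; simp [mul_comm]
      · have hzk : vtx K ℓ k = 0 := by simp [vtx, Ne.symm hℓ]
        have hzj : 0 ≤ vtx K ℓ j := by unfold vtx; split <;> norm_num
        have hθk : 0 ≤ θ k := hθ.1 k
        simp only [Set.mem_setOf_eq, hzk]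
        nlinarith
    exact hs huk
  have h2 : (-(θ j)) * u k + θ k * u j ≤ 0 := by
    have hs : subsimplex K j θ ⊆ {z | (-(θ j)) * z k + θ k * z j ≤ 0} := by
      apply convexHull_min _ (convex_halfSpace_le (hlin _ _) 0)
      rintro z (rfl | ⟨ℓ, hℓ, rfl⟩)
      · simp; ring_nf; simp [mul_comm]
      · have hzj : vtx K ℓ j = 0 := by simp [vtx, Ne.symm hℓ]
        have hzk : 0 ≤ vtx K ℓ k := by unfold vtx; split <;> norm_num
        have hθj : 0 ≤ θ j := hθ.1 j
        simp only [Set.mem_setOf_eq, hzj]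
        nlinarith
    exact hs huj
  have h1' := h1
  linarith
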